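/- arXiv:math-ph/0606044 — 4 statements merged into one kernel-verified Lean document; each statement's English description precedes it below -/
import Mathlib

section
/- Let P(t) be a C¹ family of orthogonal projections and let χ(t) solve the ODE ∂_t χ(t) = [∂_t P(t), P(t)] χ(t) with initial condition χ(0) ∈ Ran P(0). Then χ(t) ∈ Ran P(t) for all t and ⟨χ(t), ∂_t χ(t)⟩ = 0 whenever ∥χ(0)∥ is arbitrary (in particular the norm ∥χ(t)∥ is conserved). -/
open ContinuousLinearMap
open scoped InnerProductSpace

/-!
Let `y = (1 - P) χ` be the component of `χ` off `Ran P`. Differentiating `P² = P` gives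
`P' P + P P' = P'`, hence `P P' P = 0`, and with it the transport equation becomes `y' = -P' y`.
For `y ∈ ker P` the Leibniz identity gives `P' y = P P' y`, so `⟪y, P' y⟫ = ⟪P y, P' y⟫ = 0`:
the norm of `y` is conserved and `y`, which vanishes at `0`, vanishes everywhere. Once `χ ∈ Ran P`,
`⟪χ, [P', P] χ⟫ = ⟪χ, P' χ⟫ - ⟪P χ, P' χ⟫ = 0`, which in turn conserves `‖χ‖`.
-/

section IdempotentDerivation

variable {R : Type*} [Ring R] {p d : R}

theorem IsIdempotentElem.mul_mul_self_eq_zero (hp : IsIdempotentElem p) (hd : d * p + p * d = d) :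
    p * d * p = 0 := by
  have hleft := congrArg (p * ·) hd
  simp only [mul_add, ← mul_assoc, hp.eq] at hleft
  simpa using hleft

theorem IsIdempotentElem.neg_add_one_sub_mul_commutator (hp : IsIdempotentElem p)
    (hd : d * p + p * d = d) : -d + (1 - p) * (d * p - p * d) = -(d * (1 - p)) := by
  have hpdp := hp.mul_mul_self_eq_zero hd
  simp only [sub_mul, mul_sub, one_mul, mul_one, ← mul_assoc, hp.eq, hpdp]
  abel

end IdempotentDerivation

theorem HasDerivAt.restrictScalars_clm_apply {𝕜 𝕜' E F : Type*} [NontriviallyNormedField 𝕜]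
    [NontriviallyNormedField 𝕜'] [NormedAlgebra 𝕜 𝕜'] [NormedAddCommGroup E] [NormedSpace 𝕜 E]
    [NormedSpace 𝕜' E] [IsScalarTower 𝕜 𝕜' E] [NormedAddCommGroup F] [NormedSpace 𝕜 F]
    [NormedSpace 𝕜' F] [IsScalarTower 𝕜 𝕜' F] {c : 𝕜 → E →L[𝕜'] F} {c' : E →L[𝕜'] F}
    {u : 𝕜 → E} {u' : E} {x : 𝕜} (hc : HasDerivAt c c' x) (hu : HasDerivAt u u' x) :
    HasDerivAt (fun y => c y (u y)) (c' (u x) + c x u') x :=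
  ((restrictScalarsL 𝕜' E F 𝕜 𝕜).hasFDerivAt.comp_hasDerivAt x hc).clm_apply hu

theorem HasDerivAt.mul_add_mul_eq_of_isIdempotentElem {𝕜 𝔸 : Type*} [NontriviallyNormedField 𝕜]
    [NormedRing 𝔸] [NormedAlgebra 𝕜 𝔸] {p : 𝕜 → 𝔸} {p' : 𝔸} {x : 𝕜} (hp : HasDerivAt p p' x)
    (hidem : ∀ᶠ y in nhds x, IsIdempotentElem (p y)) : p' * p x + p x * p' = p' :=
  (hp.mul hp).unique (hp.congr_of_eventuallyEq (hidem.mono fun _ h => h))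

theorem norm_eq_of_hasDerivAt_of_re_inner_eq_zero {𝕜 E : Type*} [RCLike 𝕜] [NormedAddCommGroup E]
    [InnerProductSpace 𝕜 E] [NormedSpace ℝ E] {f f' : ℝ → E} (hf : ∀ t, HasDerivAt f (f' t) t)
    (h : ∀ t, RCLike.re ⟪f t, f' t⟫_𝕜 = 0) (t s : ℝ) : ‖f t‖ = ‖f s‖ := by
  have hinner_sq : ∀ t, HasDerivAt (fun s => ⟪f s, f s⟫_𝕜) 0 t := fun t => by
    have hderiv := (hf t).inner 𝕜 (hf t)
    rwa [← inner_conj_symm (f' t) (f t), RCLike.add_conj, h, RCLike.ofReal_zero, mul_zero] at hderiv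
  have hconst :=
    is_const_of_deriv_eq_zero (fun t => (hinner_sq t).differentiableAt)
      (fun t => (hinner_sq t).deriv) t s
  simp only [inner_self_eq_norm_sq_to_K] at hconst
  exact (sq_eq_sq₀ (norm_nonneg _) (norm_nonneg _)).1 (mod_cast hconst)

section SelfAdjointProjection

variable {𝕜 H : Type*} [RCLike 𝕜] [NormedAddCommGroup H] [InnerProductSpace 𝕜 H] [CompleteSpace H]
  {p d : H →L[𝕜] H}

theorem inner_apply_self_eq_zero_of_apply_eq_zero (hsa : IsSelfAdjoint p)
    (hd : d * p + p * d = d) {y : H} (hy : p y = 0) : ⟪y, d y⟫_𝕜 = 0 := by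
  have hdy : d y = p (d y) := by
    conv_lhs => rw [← hd]
    simp [hy]
  rw [hdy, ← hsa.adjoint_eq, adjoint_inner_right, hy, inner_zero_left]

theorem inner_commutator_apply_self_eq_zero (hsa : IsSelfAdjoint p) {x : H} (hx : p x = x) :
    ⟪x, (d * p - p * d) x⟫_𝕜 = 0 := by
  rw [sub_apply, mul_apply_eq_comp, mul_apply_eq_comp, hx, inner_sub_right, ← hsa.adjoint_eq,
    adjoint_inner_right, hx, sub_self]

end SelfAdjointProjection

theorem hasDerivAt_one_sub_apply_of_kato {E : Type*} [NormedAddCommGroup E] [NormedSpace ℂ E]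
    {P : ℝ → E →L[ℂ] E} {P' : E →L[ℂ] E} {χ : ℝ → E} {t : ℝ} (hP : HasDerivAt P P' t)
    (hidem : ∀ s, IsIdempotentElem (P s))
    (hχ : HasDerivAt χ ((P' * P t - P t * P') (χ t)) t) :
    HasDerivAt (fun s => (1 - P s) (χ s)) (-P' ((1 - P t) (χ t))) t := by
  have hd := hP.mul_add_mul_eq_of_isIdempotentElem (.of_forall hidem)
  convert (hP.const_sub 1).restrictScalars_clm_apply hχ using 1
  rw [← mul_apply_eq_comp, ← neg_apply, ← (hidem t).neg_add_one_sub_mul_commutator hd, add_apply,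
    mul_apply_eq_comp]

theorem kato_parallel_transport_general
    {H : Type*} [NormedAddCommGroup H] [InnerProductSpace ℂ H] [CompleteSpace H]
    (P P' : ℝ → H →L[ℂ] H)
    (hPderiv : ∀ t, HasDerivAt P (P' t) t)
    (hidem : ∀ t, P t ∘L P t = P t)
    (hsa : ∀ t, ContinuousLinearMap.adjoint (P t) = P t)
    (χ χ' : ℝ → H)
    (hχderiv : ∀ t, HasDerivAt χ (χ' t) t)
    (hODE : ∀ t, χ' t = (P' t ∘L P t - P t ∘L P' t) (χ t))
    (hinit : P 0 (χ 0) = χ 0) :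
    ∀ t : ℝ, P t (χ t) = χ t ∧ ⟪χ t, χ' t⟫_ℂ = 0 ∧ ‖χ t‖ = ‖χ 0‖ := by
  have hproj : ∀ t, IsIdempotentElem (P t) := hidem
  have hleib : ∀ t, P' t * P t + P t * P' t = P' t := fun t =>
    (hPderiv t).mul_add_mul_eq_of_isIdempotentElem (.of_forall hproj)
  have hdefect : ∀ t, HasDerivAt (fun s => (1 - P s) (χ s)) (-P' t ((1 - P t) (χ t))) t :=
    fun t => hasDerivAt_one_sub_apply_of_kato (hPderiv t) hproj (hODE t ▸ hχderiv t)
  have hdefect_orth : ∀ t, RCLike.re ⟪(1 - P t) (χ t), -P' t ((1 - P t) (χ t))⟫_ℂ = 0 := by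
    intro t
    have hker : P t ((1 - P t) (χ t)) = 0 := by
      rw [← mul_apply_eq_comp, (hproj t).mul_one_sub_self, zero_apply]
    rw [inner_neg_right, inner_apply_self_eq_zero_of_apply_eq_zero (hsa t) (hleib t) hker,
      neg_zero, map_zero]
  have hrange : ∀ t, P t (χ t) = χ t := by
    intro t
    have hnorm := norm_eq_of_hasDerivAt_of_re_inner_eq_zero hdefect hdefect_orth t 0
    rw [sub_apply, one_apply_eq_self, sub_apply, one_apply_eq_self, hinit, sub_self, norm_zero,
      norm_eq_zero, sub_eq_zero] at hnorm
    exact hnorm.symm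
  have hinner : ∀ t, ⟪χ t, χ' t⟫_ℂ = 0 := fun t => by
    rw [hODE t]
    exact inner_commutator_apply_self_eq_zero (hsa t) (hrange t)
  exact fun t => ⟨hrange t, hinner t,
    norm_eq_of_hasDerivAt_of_re_inner_eq_zero hχderiv (fun s => by rw [hinner s, map_zero]) t 0⟩

/-- Kato parallel transport: if `P t` is a `C¹` family of orthogonal projections and
`χ` solves `∂ₜχ = [∂ₜP, P] χ` with `χ 0 ∈ Ran (P 0)`, then `χ t ∈ Ran (P t)` for all `t`,
`⟪χ t, ∂ₜχ t⟫ = 0`, and the norm `‖χ t‖` is conserved. -/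
theorem kato_parallel_transport
    {H : Type*} [NormedAddCommGroup H] [InnerProductSpace ℂ H] [CompleteSpace H]
    (P P' : ℝ → H →L[ℂ] H)
    (hPderiv : ∀ t, HasDerivAt P (P' t) t)
    (hP'cont : Continuous P')
    (hidem : ∀ t, P t ∘L P t = P t)
    (hsa : ∀ t, ContinuousLinearMap.adjoint (P t) = P t)
    (χ χ' : ℝ → H)
    (hχderiv : ∀ t, HasDerivAt χ (χ' t) t)
    (hODE : ∀ t, χ' t = (P' t ∘L P t - P t ∘L P' t) (χ t))
    (hinit : P 0 (χ 0) = χ 0) :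
    ∀ t : ℝ, P t (χ t) = χ t ∧ ⟪χ t, χ' t⟫_ℂ = 0 ∧ ‖χ t‖ = ‖χ 0‖ :=
  kato_parallel_transport_general P P' hPderiv hidem hsa χ χ' hχderiv hODE hinit
end

section
/- Let A be a bounded operator with A² - A = R where ∥R∥ < 1/4. Then the spectrum of A is contained in the union of the two disks of radius 1/2 centered at 0 and 1, and is disjoint from the circle |z - 1| = 1/2; hence the Riesz projection P = (i/2π) ∮_{|z-1|=1/2} (A - z)⁻¹ dz is well-defined. -/
/-!
If `z ∈ σ(A)` then `z² - z ∈ σ(A² - A)` by the spectral mapping theorem, so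
`‖z‖ ‖z - 1‖ = ‖z² - z‖ ≤ ‖A² - A‖ < 1/4`. Hence `‖z‖` and `‖z - 1‖` cannot both be `≥ 1/2`,
while on the circle `‖z - 1‖ = 1/2` the triangle inequality gives `‖z‖ ≥ 1/2`.
-/

open Polynomial

theorem spectrum.sq_sub_self_mem {𝕜 A : Type*} [Field 𝕜] [Ring A] [Algebra 𝕜 A]
    {a : A} {z : 𝕜} (hz : z ∈ spectrum 𝕜 a) : z ^ 2 - z ∈ spectrum 𝕜 (a ^ 2 - a) := by
  have hmap := spectrum.subset_polynomial_aeval a (X ^ 2 - X) ⟨z, hz, rfl⟩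
  simpa using hmap

theorem spectrum.norm_mul_norm_sub_one_le {𝕜 A : Type*} [NormedField 𝕜] [NormedRing A]
    [NormedAlgebra 𝕜 A] [CompleteSpace A] [NormOneClass A] {a : A} {z : 𝕜}
    (hz : z ∈ spectrum 𝕜 a) : ‖z‖ * ‖z - 1‖ ≤ ‖a ^ 2 - a‖ := by
  have hfactor : z ^ 2 - z = z * (z - 1) := by ring
  rw [← norm_mul, ← hfactor]
  exact spectrum.norm_le_norm_of_mem (spectrum.sq_sub_self_mem hz)

theorem lt_half_or_lt_half_of_mul_lt_quarter {a b : ℝ} (h : a * b < 1 / 4) :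
    a < 1 / 2 ∨ b < 1 / 2 := by
  by_contra! hab
  nlinarith

theorem quarter_le_norm_mul_norm_sub_one {R : Type*} [SeminormedRing R] [NormOneClass R] {z : R}
    (hz : ‖z - 1‖ = 1 / 2) : 1 / 4 ≤ ‖z‖ * ‖z - 1‖ := by
  have hz_ge : 1 / 2 ≤ ‖z‖ := by
    have := norm_sub_norm_le (1 : R) (1 - z)
    rw [sub_sub_cancel, norm_one, norm_sub_rev, hz] at this
    linarith
  rw [hz]
  linarith

/-- If `A` is a bounded operator with `‖A² - A‖ < 1/4`, then the spectrum of `A` is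
contained in the union of the two open disks of radius `1/2` centered at `0` and `1`;
in particular the spectrum is disjoint from the circle `|z - 1| = 1/2`, so the Riesz
projection along this circle is well defined. -/
theorem spectrum_almost_projection
    {H : Type*} [NormedAddCommGroup H] [InnerProductSpace ℂ H] [CompleteSpace H]
    [Nontrivial H]
    (A : H →L[ℂ] H) (hR : ‖A ∘L A - A‖ < 1 / 4) :
    (∀ z ∈ spectrum ℂ A, ‖z‖ < 1 / 2 ∨ ‖z - 1‖ < 1 / 2) ∧
    (∀ z : ℂ, ‖z - 1‖ = 1 / 2 → z ∉ spectrum ℂ A) := by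
  have hR' : ‖A ^ 2 - A‖ < 1 / 4 := by rwa [sq]
  have hspec : ∀ z ∈ spectrum ℂ A, ‖z‖ * ‖z - 1‖ < 1 / 4 := fun z hz =>
    (spectrum.norm_mul_norm_sub_one_le hz).trans_lt hR'
  refine ⟨fun z hz => lt_half_or_lt_half_of_mul_lt_quarter (hspec z hz), fun z hz hmem => ?_⟩
  exact (quarter_le_norm_mul_norm_sub_one hz).not_gt (hspec z hmem)
end

section
/- Let A be a bounded self-adjoint operator with ∥A² - A∥ ≤ ε < 1/4. Then the spectral projection P of A onto the part of the spectrum contained in {λ : |λ - 1| < 1/2} satisfies ∥P - A∥ ≤ Cε for a constant C depending only on the spectral bound, i.e., ∥P - A∥ = O(ε). -/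
open ContinuousLinearMap

/-!
By the isometric functional calculus, `|x² - x| ≤ ε := ‖A² - A‖` on the spectrum of `A`; for
`ε < 1/4` this keeps `1/2` out of the spectrum, so the step function `1_{(1/2, ∞)}` is continuous
there. Since `|1_{(1/2, ∞)}(x) - x| ≤ 2 |x² - x|` for every real `x`, the functional calculus gives
`‖P - A‖ = ‖cfc (1_{(1/2, ∞)} - id) A‖ ≤ 2ε`.
-/

theorem abs_ite_half_lt_sub_le_two_mul_abs_sq_sub (x : ℝ) :
    |(if 1 / 2 < x then (1 : ℝ) else 0) - x| ≤ 2 * |x ^ 2 - x| := by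
  have hfac : |x ^ 2 - x| = |x| * |x - 1| := by rw [← abs_mul]; ring_nf
  rw [hfac]
  split_ifs with h
  · have : 1 ≤ 2 * |x| := by rw [abs_of_pos (by linarith)]; linarith
    rw [abs_sub_comm]
    nlinarith [abs_nonneg (x - 1)]
  · have : 1 ≤ 2 * |x - 1| := by rw [abs_of_nonpos (by linarith)]; linarith
    rw [zero_sub, abs_neg]
    nlinarith [abs_nonneg x]

theorem continuousOn_ite_lt_compl_singleton {α β : Type*} [LinearOrder α] [TopologicalSpace α]
    [OrderTopology α] [TopologicalSpace β] (c : α) (b₁ b₀ : β) :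
    ContinuousOn (fun x => if c < x then b₁ else b₀) {c}ᶜ := by
  intro x hx
  refine ContinuousAt.continuousWithinAt ?_
  rcases lt_or_gt_of_ne hx with h | h
  · refine (continuousAt_const (y := b₀)).congr ?_
    filter_upwards [Iio_mem_nhds h] with y hy
    exact (if_neg (not_lt.2 hy.le)).symm
  · refine (continuousAt_const (y := b₁)).congr ?_
    filter_upwards [Ioi_mem_nhds h] with y hy
    exact (if_pos hy).symm

section

variable {A : Type*} [NormedRing A] [StarRing A] [NormedAlgebra ℝ A]
  [IsometricContinuousFunctionalCalculus ℝ A IsSelfAdjoint]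

theorem IsSelfAdjoint.abs_sq_sub_le_norm_mul_self_sub {a : A} (ha : IsSelfAdjoint a) {x : ℝ}
    (hx : x ∈ spectrum ℝ a) : |x ^ 2 - x| ≤ ‖a * a - a‖ := by
  have h := norm_apply_le_norm_cfc (fun x : ℝ => x ^ 2 - x) a hx
  rw [cfc_sub _ _ a, cfc_pow_id a, cfc_id' ℝ a] at h
  simpa only [sq, Real.norm_eq_abs] using h

theorem IsSelfAdjoint.norm_cfc_ite_half_lt_sub_le {a : A} (ha : IsSelfAdjoint a)
    (hε : ‖a * a - a‖ < 1 / 4) :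
    ‖cfc (fun x : ℝ => if 1 / 2 < x then (1 : ℝ) else 0) a - a‖ ≤ 2 * ‖a * a - a‖ := by
  have h_half : (1 / 2 : ℝ) ∉ spectrum ℝ a := fun h => by
    have := ha.abs_sq_sub_le_norm_mul_self_sub h
    norm_num at this
    linarith
  have hcont := (continuousOn_ite_lt_compl_singleton (1 / 2 : ℝ) (1 : ℝ) 0).mono
    (Set.subset_compl_singleton_iff.2 h_half)
  calc ‖cfc (fun x : ℝ => if 1 / 2 < x then (1 : ℝ) else 0) a - a‖
      = ‖cfc (fun x : ℝ => (if 1 / 2 < x then (1 : ℝ) else 0) - x) a‖ := by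
        rw [cfc_sub _ _ a hcont, cfc_id' ℝ a]
    _ ≤ 2 * ‖a * a - a‖ := norm_cfc_le (by positivity) fun x hx =>
        (abs_ite_half_lt_sub_le_two_mul_abs_sq_sub x).trans
          (by gcongr; exact ha.abs_sq_sub_le_norm_mul_self_sub hx)

end

/-- If `A` is self-adjoint with `ε := ‖A² - A‖ < 1/4`, then the spectral projection
`P = 1_{(1/2, ∞)}(A)` of `A` onto the part of its spectrum near `1` satisfies
`‖P - A‖ ≤ C·ε` for a universal constant `C`, i.e. `‖P - A‖ = O(ε)`. -/
theorem spectral_projection_close_to_almost_projection :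
    ∃ C : ℝ, 0 < C ∧
      ∀ (H : Type) [NormedAddCommGroup H] [InnerProductSpace ℂ H] [CompleteSpace H],
        ∀ A : H →L[ℂ] H, IsSelfAdjoint A → ‖A ∘L A - A‖ < 1 / 4 →
          ‖cfc (fun x : ℝ => if 1 / 2 < x then (1 : ℝ) else 0) A - A‖
            ≤ C * ‖A ∘L A - A‖ :=
  ⟨2, two_pos, fun _ _ _ _ _ hA hε => hA.norm_cfc_ite_half_lt_sub_le hε⟩
end

section
/- Gronwall-type propagator bound: let H(t) be a family of self-adjoint operators with form domain containing D, such that μ₋∥∇ψ∥² − ν₋∥ψ∥² ≤ ⟨ψ, H(t)ψ⟩ ≤ μ₊∥∇ψ∥² + ν₊∥ψ∥² uniformly in t, and |⟨ψ, Ḣ(t)ψ⟩| ≤ c μ₋ ∥ψ∥²_{H¹}. If ψ(t) solves iε∂_tψ = H(t)ψ, then the norm ∥ψ(t)∥_t² := ⟨ψ(t), H(t)ψ(t)⟩ + (ν₋+μ₋)∥ψ(t)∥² satisfies ∥ψ(t)∥_t² ≤ e^{ct} ∥ψ(0)∥_0², and hence ∥ψ(t)∥_{H¹} ≤ C e^{ct/2}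 ∥ψ(0)∥_{H¹} with C = ((μ₊+μ₋+ν₊+ν₋)/μ₋)^{1/2}. -/
open ContinuousLinearMap
open scoped InnerProductSpace

/-!
Along a solution of `iε ψ' = H ψ`, the numbers `⟪ψ', Hψ⟫ = iε ‖ψ'‖²` and
`⟪ψ, ψ'⟫ = -(i/ε) ⟪ψ, Hψ⟫` are purely imaginary, the latter because `H` is self-adjoint. Hence
the mass `‖ψ‖²` is conserved and the energy `‖ψ(t)‖ₜ² = Re ⟪ψ, Hψ⟫ + (ν₋+μ₋) ‖ψ‖²` has
derivative `Re ⟪ψ, Ḣψ⟫`. The lower form bound gives `μ₋ ‖ψ‖²_{H¹} ≤ ‖ψ‖ₜ²`, so this derivative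
is at most `c ‖ψ‖ₜ²` and Gronwall's inequality bounds the energy; the upper form bound
converts the energy at time `0` back into `(μ₊+μ₋+ν₊+ν₋) ‖ψ(0)‖²_{H¹}`.
-/

theorem le_exp_mul_mul_of_hasDerivAt {f f' : ℝ → ℝ} {c t : ℝ}
    (hf : ∀ s, HasDerivAt f (f' s) s) (hbound : ∀ s, f' s ≤ c * f s) (ht : 0 ≤ t) :
    f t ≤ Real.exp (c * t) * f 0 := by
  have := le_gronwallBound_of_liminf_deriv_right_le (f' := f') (δ := f 0) (K := c) (ε := 0)
    (b := t) (fun s _ => (hf s).continuousAt.continuousWithinAt)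
    (fun s _ _ hr => (hf s).hasDerivWithinAt.liminf_right_slope_le hr) le_rfl
    (fun s _ => by simpa using hbound s) t ⟨ht, le_rfl⟩
  rwa [gronwallBound_ε0, sub_zero, mul_comm] at this

section

variable {E : Type*} [NormedAddCommGroup E] [InnerProductSpace ℂ E]

theorem HasDerivAt.re_inner_apply_self {T T' : ℝ → E →L[ℂ] E} {ψ ψ' : ℝ → E} {t : ℝ}
    (hT : HasDerivAt T (T' t) t) (hψ : HasDerivAt ψ (ψ' t) t)
    (hsym : (T t : E →ₗ[ℂ] E).IsSymmetric) :
    HasDerivAt (fun s => (⟪ψ s, T s (ψ s)⟫_ℂ).re)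
      ((⟪ψ t, T' t (ψ t)⟫_ℂ).re + 2 * (⟪ψ' t, T t (ψ t)⟫_ℂ).re) t := by
  have hTψ : HasDerivAt (fun s => T s (ψ s)) (T' t (ψ t) + T t (ψ' t)) t := by
    simpa using ((restrictScalarsL ℂ E E ℝ ℝ).hasFDerivAt.comp_hasDerivAt t hT).clm_apply hψ
  have hswap : (⟪ψ t, T t (ψ' t)⟫_ℂ).re = (⟪ψ' t, T t (ψ t)⟫_ℂ).re := by
    rw [← coe_coe, ← hsym, ← inner_conj_symm, Complex.conj_re, coe_coe]
  refine (Complex.reCLM.hasFDerivAt.comp_hasDerivAt t (hψ.inner ℂ hTψ)).congr_deriv ?_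
  simp only [Complex.reCLM_apply, inner_add_right, Complex.add_re, hswap]
  ring

theorem re_inner_I_mul_smul_self (ε : ℝ) (x : E) : (⟪x, (Complex.I * ε) • x⟫_ℂ).re = 0 := by
  simp [inner_self_eq_norm_sq_to_K, ← Complex.ofReal_pow]

theorem LinearMap.IsSymmetric.re_inner_eq_zero_of_I_mul_smul_eq {T : E →ₗ[ℂ] E}
    (hT : T.IsSymmetric) {ε : ℝ} (hε : ε ≠ 0) {x v : E} (h : (Complex.I * ε) • v = T x) :
    (⟪x, v⟫_ℂ).re = 0 := by
  have him := congrArg Complex.im (congrArg (⟪x, ·⟫_ℂ) h)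
  have hreal : (⟪x, T x⟫_ℂ).im = 0 := hT.im_inner_self_apply x
  rw [inner_smul_right, hreal] at him
  simpa [hε] using him

theorem hasDerivAt_energy_of_schrodinger {T T' : ℝ → E →L[ℂ] E} {ψ ψ' : ℝ → E} {ε κ t : ℝ}
    (hε : ε ≠ 0) (hT : HasDerivAt T (T' t) t) (hψ : HasDerivAt ψ (ψ' t) t)
    (hsym : (T t : E →ₗ[ℂ] E).IsSymmetric) (hS : (Complex.I * ε) • ψ' t = T t (ψ t)) :
    HasDerivAt (fun s => (⟪ψ s, T s (ψ s)⟫_ℂ).re + κ * ‖ψ s‖ ^ 2) (⟪ψ t, T' t (ψ t)⟫_ℂ).re t := by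
  have hwork : (⟪ψ' t, T t (ψ t)⟫_ℂ).re = 0 := by
    rw [← hS]
    exact re_inner_I_mul_smul_self ε (ψ' t)
  have hmass : HasDerivAt (fun s => ‖ψ s‖ ^ 2) 0 t := by
    refine (Complex.reCLM.hasFDerivAt.comp_hasDerivAt t (hψ.inner ℂ hψ)).congr_of_eventuallyEq
      ?_ |>.congr_deriv ?_
    · exact Filter.Eventually.of_forall fun s => (inner_self_eq_norm_sq (𝕜 := ℂ) (ψ s)).symm
    · have hre : (⟪ψ t, ψ' t⟫_ℂ).re = 0 := hsym.re_inner_eq_zero_of_I_mul_smul_eq hε hS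
      rw [Complex.reCLM_apply, Complex.add_re, ← inner_conj_symm (ψ' t), Complex.conj_re, hre,
        add_zero]
  refine ((hT.re_inner_apply_self hψ hsym).add (hmass.const_mul κ)).congr_deriv ?_
  rw [hwork]
  ring

end

/-- Gronwall-type propagator bound: suppose the self-adjoint family `H(t)` satisfies the
form bounds `μ₋‖Dψ‖² - ν₋‖ψ‖² ≤ ⟪ψ, H(t)ψ⟫ ≤ μ₊‖Dψ‖² + ν₊‖ψ‖²` (with `D` playing the
role of the gradient) and `|⟪ψ, Ḣ(t)ψ⟫| ≤ c μ₋ (‖Dψ‖² + ‖ψ‖²)`. If `ψ` solves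
`iε ∂ₜψ = H(t)ψ`, then the energy norm
`‖ψ(t)‖ₜ² := ⟪ψ(t), H(t)ψ(t)⟫ + (ν₋+μ₋)‖ψ(t)‖²` satisfies
`‖ψ(t)‖ₜ² ≤ e^{ct} ‖ψ(0)‖₀²`, and hence
`‖ψ(t)‖²_{H¹} ≤ ((μ₊+μ₋+ν₊+ν₋)/μ₋) e^{ct} ‖ψ(0)‖²_{H¹}` for `t ≥ 0`. -/
theorem gronwall_propagator_bound
    {H : Type*} [NormedAddCommGroup H] [InnerProductSpace ℂ H] [CompleteSpace H]
    (μm νm μp νp c ε : ℝ)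
    (hμm : 0 < μm) (hνm : 0 < νm) (hμp : 0 < μp) (hνp : 0 < νp) (hc : 0 < c)
    (hε : 0 < ε)
    (D : H →L[ℂ] H)
    (Ht Ht' : ℝ → H →L[ℂ] H)
    (hsa : ∀ t, IsSelfAdjoint (Ht t))
    (hHderiv : ∀ t, HasDerivAt Ht (Ht' t) t)
    (hform : ∀ (t : ℝ) (ψ : H),
      μm * ‖D ψ‖ ^ 2 - νm * ‖ψ‖ ^ 2 ≤ (⟪ψ, Ht t ψ⟫_ℂ).re ∧
      (⟪ψ, Ht t ψ⟫_ℂ).re ≤ μp * ‖D ψ‖ ^ 2 + νp * ‖ψ‖ ^ 2)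
    (hdot : ∀ (t : ℝ) (ψ : H),
      |(⟪ψ, Ht' t ψ⟫_ℂ).re| ≤ c * μm * (‖D ψ‖ ^ 2 + ‖ψ‖ ^ 2))
    (ψ ψ' : ℝ → H)
    (hψderiv : ∀ t, HasDerivAt ψ (ψ' t) t)
    (hSchr : ∀ t, (Complex.I * (ε : ℂ)) • ψ' t = Ht t (ψ t)) :
    ∀ t : ℝ, 0 ≤ t →
      ((⟪ψ t, Ht t (ψ t)⟫_ℂ).re + (νm + μm) * ‖ψ t‖ ^ 2
          ≤ Real.exp (c * t) * ((⟪ψ 0, Ht 0 (ψ 0)⟫_ℂ).re + (νm + μm) * ‖ψ 0‖ ^ 2)) ∧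
      (‖D (ψ t)‖ ^ 2 + ‖ψ t‖ ^ 2
          ≤ ((μp + μm + νp + νm) / μm) * Real.exp (c * t)
              * (‖D (ψ 0)‖ ^ 2 + ‖ψ 0‖ ^ 2)) := by
  set energy : ℝ → ℝ := fun t => (⟪ψ t, Ht t (ψ t)⟫_ℂ).re + (νm + μm) * ‖ψ t‖ ^ 2
  have hcoercive : ∀ t, μm * (‖D (ψ t)‖ ^ 2 + ‖ψ t‖ ^ 2) ≤ energy t := fun t => by
    linarith [(hform t (ψ t)).1]
  have hgrowth : ∀ t, (⟪ψ t, Ht' t (ψ t)⟫_ℂ).re ≤ c * energy t := fun t =>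
    calc _ ≤ c * μm * (‖D (ψ t)‖ ^ 2 + ‖ψ t‖ ^ 2) := (le_abs_self _).trans (hdot t (ψ t))
      _ ≤ c * energy t := by rw [mul_assoc]; exact mul_le_mul_of_nonneg_left (hcoercive t) hc.le
  intro t ht
  have hE : energy t ≤ Real.exp (c * t) * energy 0 :=
    le_exp_mul_mul_of_hasDerivAt (fun s => hasDerivAt_energy_of_schrodinger hε.ne'
      (hHderiv s) (hψderiv s) (hsa s).isSymmetric (hSchr s)) hgrowth ht
  refine ⟨hE, ?_⟩
  have hbounded : energy 0 ≤ (μp + μm + νp + νm) * (‖D (ψ 0)‖ ^ 2 + ‖ψ 0‖ ^ 2) := by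
    nlinarith [(hform 0 (ψ 0)).2, sq_nonneg ‖D (ψ 0)‖, sq_nonneg ‖ψ 0‖]
  rw [div_mul_eq_mul_div, div_mul_eq_mul_div, le_div_iff₀ hμm]
  nlinarith [hcoercive t, Real.exp_pos (c * t)]
end
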